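/- arXiv:1612.06048 — 2 statements merged into one kernel-verified Lean document; each statement's English description precedes it below -/
import Mathlib

section
/- Let 𝓛 := span{a(m)b(n) : a,b ∈ 𝔥, m,n ∈ ℤ} ⊆ U(ĥ) and let 𝓘 := span{L_{a,b}(m,n) : a,b ∈ 𝔥, m,n ∈ ℤ with mn = 0}. Then for all x ∈ 𝓘 and y ∈ 𝓛, the commutator [x, y] = xy − yx lies in c·𝓘, i.e. 𝓘 is an ideal of 𝓛 with respect to the rescaled bracket (1/c)[·,·]. -/
noncomputable section

variable (V : Type*) [AddCommGroup V] [Module ℂ V]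

/-- The underlying space of the Heisenberg Lie algebra `𝔥 ⊗ ℂ[t,t⁻¹] ⊕ ℂ c` attached to a
vector space `𝔥` with a bilinear form `B`; the element `(f, s)` represents
`∑ₘ (f m)(m) + s·c`, where `a(m)` denotes `a ⊗ tᵐ`. -/
def Heis (B : V →ₗ[ℂ] V →ₗ[ℂ] ℂ) : Type _ := (ℤ →₀ V) × ℂ

variable {V}
variable (B : V →ₗ[ℂ] V →ₗ[ℂ] ℂ)

instance : AddCommGroup (Heis V B) := inferInstanceAs (AddCommGroup ((ℤ →₀ V) × ℂ))
instance : Module ℂ (Heis V B) := inferInstanceAs (Module ℂ ((ℤ →₀ V) × ℂ))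

namespace Heis

lemma add_fst (x y : Heis V B) : (x + y).1 = x.1 + y.1 := rfl
lemma add_snd (x y : Heis V B) : (x + y).2 = x.2 + y.2 := rfl
lemma smul_fst (t : ℂ) (x : Heis V B) : (t • x).1 = t • x.1 := rfl
lemma smul_snd (t : ℂ) (x : Heis V B) : (t • x).2 = t • x.2 := rfl
lemma zero_fst : (0 : Heis V B).1 = 0 := rfl
lemma zero_snd : (0 : Heis V B).2 = 0 := rfl

end Heis

/-- The pairing `∑ₘ m · B (f m) (g (−m))` giving the central term of the bracket. -/
def heisP (f g : ℤ →₀ V) : ℂ := f.sum fun m a => (m : ℂ) * B a (g (-m))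

lemma heisP_zero_left (g : ℤ →₀ V) : heisP B 0 g = 0 := Finsupp.sum_zero_index

lemma heisP_zero_right (f : ℤ →₀ V) : heisP B f 0 = 0 := by
  simp [heisP]

lemma heisP_add_left (f f' g : ℤ →₀ V) :
    heisP B (f + f') g = heisP B f g + heisP B f' g := by
  unfold heisP
  refine Finsupp.sum_add_index' (fun m => by simp) (fun m a a' => by simp [mul_add])

lemma heisP_add_right (f g g' : ℤ →₀ V) :
    heisP B f (g + g') = heisP B f g + heisP B f g' := by
  unfold heisP
  rw [← Finsupp.sum_add]
  exact Finsupp.sum_congr fun m _ => by simp [mul_add]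

lemma heisP_smul_left (t : ℂ) (f g : ℤ →₀ V) : heisP B (t • f) g = t * heisP B f g := by
  unfold heisP
  rw [Finsupp.sum_smul_index' (fun m => by simp), Finsupp.sum, Finsupp.sum, Finset.mul_sum]
  refine Finset.sum_congr rfl fun m _ => ?_
  simp only [map_smul, LinearMap.smul_apply, smul_eq_mul]
  ring

lemma heisP_smul_right (t : ℂ) (f g : ℤ →₀ V) : heisP B f (t • g) = t * heisP B f g := by
  unfold heisP
  rw [Finsupp.sum, Finsupp.sum, Finset.mul_sum]
  refine Finset.sum_congr rfl fun m _ => ?_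
  simp only [Finsupp.smul_apply, map_smul, smul_eq_mul]
  ring

instance : LieRing (Heis V B) where
  bracket x y := (0, (heisP B x.1 y.1 - heisP B y.1 x.1) / 2)
  add_lie x y z := by
    refine Prod.ext ?_ ?_
    · exact (zero_add (0 : ℤ →₀ V)).symm
    · show (heisP B (x + y).1 z.1 - heisP B z.1 (x + y).1) / 2 =
        (heisP B x.1 z.1 - heisP B z.1 x.1) / 2 + (heisP B y.1 z.1 - heisP B z.1 y.1) / 2
      rw [Heis.add_fst, heisP_add_left, heisP_add_right]
      ring
  lie_add x y z := by
    refine Prod.ext ?_ ?_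
    · exact (zero_add (0 : ℤ →₀ V)).symm
    · show (heisP B x.1 (y + z).1 - heisP B (y + z).1 x.1) / 2 =
        (heisP B x.1 y.1 - heisP B y.1 x.1) / 2 + (heisP B x.1 z.1 - heisP B z.1 x.1) / 2
      rw [Heis.add_fst, heisP_add_left, heisP_add_right]
      ring
  lie_self x := by
    refine Prod.ext rfl ?_
    show (heisP B x.1 x.1 - heisP B x.1 x.1) / 2 = (0 : Heis V B).2
    rw [Heis.zero_snd]
    ring
  leibniz_lie x y z := by
    refine Prod.ext ?_ ?_
    · exact (zero_add (0 : ℤ →₀ V)).symm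
    · show (heisP B x.1 (0 : ℤ →₀ V) - heisP B (0 : ℤ →₀ V) x.1) / 2 =
        (heisP B (0 : ℤ →₀ V) z.1 - heisP B z.1 (0 : ℤ →₀ V)) / 2 +
        (heisP B y.1 (0 : ℤ →₀ V) - heisP B (0 : ℤ →₀ V) y.1) / 2
      rw [heisP_zero_left, heisP_zero_right, heisP_zero_left, heisP_zero_right,
        heisP_zero_left, heisP_zero_right]
      ring

instance : LieAlgebra ℂ (Heis V B) where
  lie_smul t x y := by
    refine Prod.ext ?_ ?_
    · exact (smul_zero t).symm
    · show (heisP B x.1 (t • y).1 - heisP B (t • y).1 x.1) / 2 =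
        t • ((heisP B x.1 y.1 - heisP B y.1 x.1) / 2)
      rw [Heis.smul_fst, heisP_smul_left, heisP_smul_right, smul_eq_mul]
      ring

/-- `a(m) = a ⊗ tᵐ` as an element of the Heisenberg Lie algebra. -/
def Heis.gen (a : V) (m : ℤ) : Heis V B := (Finsupp.single m a, 0)

/-- The central element `c` of the Heisenberg Lie algebra. -/
def Heis.cen : Heis V B := (0, 1)


/-- `U(ĥ)`, the universal enveloping algebra of the Heisenberg Lie algebra. -/
abbrev UHeis : Type _ := UniversalEnvelopingAlgebra ℂ (Heis V B)

/-- The image of `a(m)` in `U(ĥ)`. -/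
def genU (a : V) (m : ℤ) : UHeis B := UniversalEnvelopingAlgebra.ι ℂ (Heis.gen B a m)

/-- The image of `c` in `U(ĥ)`. -/
def cenU : UHeis B := UniversalEnvelopingAlgebra.ι ℂ (Heis.cen B)

/-- The normal ordering `:a(m)b(n):` in `U(ĥ)`. -/
def no (a b : V) (m n : ℤ) : UHeis B :=
  if n ≤ m then genU B b n * genU B a m else genU B a m * genU B b n

/-- `L_{a,b}(m,n) := ½ :a(m)b(n):`. -/
def LU (a b : V) (m n : ℤ) : UHeis B := (2⁻¹ : ℂ) • no B a b m n

/-- `𝓛 = span{a(m)b(n) : a,b ∈ 𝔥, m,n ∈ ℤ} ⊆ U(ĥ)`. -/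
def spanL : Submodule ℂ (UHeis B) :=
  Submodule.span ℂ {x : UHeis B | ∃ a b : V, ∃ m n : ℤ, x = genU B a m * genU B b n}

/-- `𝓘 = span{L_{a,b}(m,n) : a,b ∈ 𝔥, m,n ∈ ℤ, mn = 0}`. -/
def spanI : Submodule ℂ (UHeis B) :=
  Submodule.span ℂ {x : UHeis B | ∃ a b : V, ∃ m n : ℤ, m * n = 0 ∧ x = LU B a b m n}

/-!
Every generator `L_{a,b}(m,n)` with `mn = 0` is, up to the factor `½`, a product `a'(0) b'(n')`
whose first factor is a zero mode, and zero modes are central in `ĥ`. Hence for `y = C D` a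
product of two generators, `[a'(0) b'(n'), C D] = a'(0) ([b'(n'), C] D + C [b'(n'), D])`, and each
inner commutator is a multiple of `c`. What remains is `c` times a combination of `a'(0) D` and
`a'(0) C`, which again lie in `𝓘`. Bilinearity of the commutator extends this to the spans.
-/

theorem commutator_mem_of_mem_span {K R : Type*} [CommRing K] [Ring R] [Algebra K R]
    {s t : Set R} {M : Submodule K R}
    (hst : ∀ x ∈ s, ∀ y ∈ t, x * y - y * x ∈ M) {x y : R}
    (hx : x ∈ Submodule.span K s) (hy : y ∈ Submodule.span K t) : x * y - y * x ∈ M := by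
  let commutator : R →ₗ[K] R →ₗ[K] R := LinearMap.mul K R - (LinearMap.mul K R).flip
  have hmem := Submodule.apply_mem_map₂ commutator hx hy
  rw [Submodule.map₂_span_span] at hmem
  refine Submodule.span_le.mpr ?_ hmem
  rintro _ ⟨x, hx, y, hy, rfl⟩
  exact hst x hx y hy

theorem mul_mul_sub_mul_mul_of_commute {R : Type*} [Ring R] {A B C D : R}
    (hAC : Commute A C) (hAD : Commute A D) :
    A * B * (C * D) - C * D * (A * B) = A * ((B * C - C * B) * D) + A * (C * (B * D - D * B)) := by
  rw [← mul_assoc (C * D), ← (hAC.mul_right hAD).eq]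
  noncomm_ring

lemma heisP_single_zero_left (a : V) (f : ℤ →₀ V) : heisP B (Finsupp.single 0 a) f = 0 := by
  simp [heisP]

lemma heisP_single_zero_right (a : V) (f : ℤ →₀ V) : heisP B f (Finsupp.single 0 a) = 0 := by
  refine Finset.sum_eq_zero fun m _ => ?_
  rcases eq_or_ne m 0 with rfl | hm
  · simp
  · simp [hm]

namespace Heis

lemma lie_def (x y : Heis V B) : ⁅x, y⁆ = (0, (heisP B x.1 y.1 - heisP B y.1 x.1) / 2) := rfl

lemma lie_eq_smul_cen (x y : Heis V B) : ⁅x, y⁆ = (⁅x, y⁆).2 • cen B := by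
  rw [lie_def]
  exact Prod.ext (smul_zero _).symm (mul_one _).symm

lemma lie_cen (x : Heis V B) : ⁅cen B, x⁆ = 0 := by
  rw [lie_def]
  refine Prod.ext rfl ?_
  show (heisP B 0 x.1 - heisP B x.1 0) / 2 = 0
  rw [heisP_zero_left, heisP_zero_right, sub_zero, zero_div]

lemma lie_gen_zero (a : V) (y : Heis V B) : ⁅gen B a 0, y⁆ = 0 := by
  rw [lie_def]
  refine Prod.ext rfl ?_
  show (heisP B (Finsupp.single 0 a) y.1 - heisP B y.1 (Finsupp.single 0 a)) / 2 = 0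
  rw [heisP_single_zero_left, heisP_single_zero_right, sub_zero, zero_div]

end Heis

section Enveloping

attribute [local instance 100] LieRing.ofAssociativeRing

open UniversalEnvelopingAlgebra

lemma ι_mul_sub_mul_ι (x y : Heis V B) :
    ι ℂ x * ι ℂ y - ι ℂ y * ι ℂ x = (⁅x, y⁆).2 • cenU B := by
  rw [← Ring.lie_def, ← LieHom.map_lie]
  conv_lhs => rw [Heis.lie_eq_smul_cen]
  rw [map_smul, cenU]

lemma commute_ι_of_lie_eq_zero {x y : Heis V B} (h : ⁅x, y⁆ = 0) : Commute (ι ℂ x) (ι ℂ y) := by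
  rw [commute_iff_eq, ← sub_eq_zero, ← Ring.lie_def, ← LieHom.map_lie, h, map_zero]

end Enveloping

lemma commute_cenU_genU (a : V) (m : ℤ) : Commute (cenU B) (genU B a m) :=
  commute_ι_of_lie_eq_zero B (Heis.lie_cen B _)

lemma commute_genU_zero_genU (a b : V) (n : ℤ) : Commute (genU B a 0) (genU B b n) :=
  commute_ι_of_lie_eq_zero B (Heis.lie_gen_zero B a _)

lemma exists_genU_commutator_eq_smul_cenU (a b : V) (m n : ℤ) :
    ∃ κ : ℂ, genU B a m * genU B b n - genU B b n * genU B a m = κ • cenU B :=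
  ⟨_, ι_mul_sub_mul_ι B _ _⟩

lemma LU_zero_left (a b : V) (n : ℤ) : LU B a b 0 n = (2⁻¹ : ℂ) • (genU B a 0 * genU B b n) := by
  rw [LU, no]
  split_ifs
  · rw [(commute_genU_zero_genU B a b n).eq]
  · rfl

lemma LU_zero_right (a b : V) (m : ℤ) : LU B a b m 0 = (2⁻¹ : ℂ) • (genU B b 0 * genU B a m) := by
  rw [LU, no]
  split_ifs
  · rfl
  · rw [(commute_genU_zero_genU B b a m).eq]

def zeroModeProducts : Set (UHeis B) := {x | ∃ a b : V, ∃ n : ℤ, x = genU B a 0 * genU B b n}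

lemma genU_zero_mul_genU_mem_spanI (a b : V) (n : ℤ) : genU B a 0 * genU B b n ∈ spanI B := by
  have h : genU B a 0 * genU B b n = (2 : ℂ) • LU B a b 0 n := by
    rw [LU_zero_left, smul_smul]
    norm_num
  rw [h]
  exact Submodule.smul_mem _ _ (Submodule.subset_span ⟨a, b, 0, n, zero_mul n, rfl⟩)

lemma spanI_eq_span_zeroModeProducts : spanI B = Submodule.span ℂ (zeroModeProducts B) := by
  apply le_antisymm
  · refine Submodule.span_le.mpr ?_
    rintro _ ⟨a, b, m, n, hmn, rfl⟩
    rcases mul_eq_zero.mp hmn with rfl | rfl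
    · rw [LU_zero_left]
      exact Submodule.smul_mem _ _ (Submodule.subset_span ⟨a, b, n, rfl⟩)
    · rw [LU_zero_right]
      exact Submodule.smul_mem _ _ (Submodule.subset_span ⟨b, a, m, rfl⟩)
  · refine Submodule.span_le.mpr ?_
    rintro _ ⟨a, b, n, rfl⟩
    exact genU_zero_mul_genU_mem_spanI B a b n

lemma commutator_zeroModeProduct_mem (a b a' b' : V) (n p q : ℤ) :
    genU B a 0 * genU B b n * (genU B a' p * genU B b' q) -
        genU B a' p * genU B b' q * (genU B a 0 * genU B b n) ∈
      (spanI B).map (LinearMap.mulLeft ℂ (cenU B)) := by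
  obtain ⟨κ₁, hκ₁⟩ := exists_genU_commutator_eq_smul_cenU B b a' n p
  obtain ⟨κ₂, hκ₂⟩ := exists_genU_commutator_eq_smul_cenU B b b' n q
  have hcA := commute_cenU_genU B a 0
  have hAcD : genU B a 0 * (cenU B * genU B b' q) = cenU B * (genU B a 0 * genU B b' q) := by
    rw [← mul_assoc, ← hcA.eq, mul_assoc]
  have hACc : genU B a 0 * (genU B a' p * cenU B) = cenU B * (genU B a 0 * genU B a' p) := by
    rw [← mul_assoc, (hcA.mul_right (commute_cenU_genU B a' p)).eq]
  have hcomm : genU B a 0 * genU B b n * (genU B a' p * genU B b' q) -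
        genU B a' p * genU B b' q * (genU B a 0 * genU B b n) =
      cenU B * (κ₁ • (genU B a 0 * genU B b' q) + κ₂ • (genU B a 0 * genU B a' p)) := by
    rw [mul_mul_sub_mul_mul_of_commute (commute_genU_zero_genU B a a' p)
      (commute_genU_zero_genU B a b' q), hκ₁, hκ₂]
    simp only [smul_mul_assoc, mul_smul_comm, mul_add, hAcD, hACc]
  rw [hcomm]
  exact Submodule.mem_map_of_mem (f := LinearMap.mulLeft ℂ (cenU B)) <|
    add_mem (Submodule.smul_mem _ _ (genU_zero_mul_genU_mem_spanI B a b' q))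
      (Submodule.smul_mem _ _ (genU_zero_mul_genU_mem_spanI B a a' p))

theorem commutator_spanI_spanL_mem_c_mul_spanI :
    ∀ x ∈ spanI B, ∀ y ∈ spanL B, ∃ z ∈ spanI B, x * y - y * x = cenU B * z := by
  intro x hx y hy
  rw [spanI_eq_span_zeroModeProducts] at hx
  have hmem : x * y - y * x ∈ (spanI B).map (LinearMap.mulLeft ℂ (cenU B)) := by
    refine commutator_mem_of_mem_span ?_ hx hy
    rintro _ ⟨a, b, n, rfl⟩ _ ⟨a', b', p, q, rfl⟩
    exact commutator_zeroModeProduct_mem B a b a' b' n p q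
  obtain ⟨z, hz, hcz⟩ := Submodule.mem_map.mp hmem
  exact ⟨z, hz, hcz.symm⟩
end
end

section
/- Let 𝓛 := span{a(m)b(n) : a,b ∈ 𝔥, m,n ∈ ℤ} ⊆ U(ĥ), let C_∞ := span{½(a(m)b(n) + b(n)a(m)) : a,b ∈ 𝔥, m,n ∈ ℤ, m ≠ 0 and n ≠ 0}, and let 𝓘 := span{L_{a,b}(m,n) : a,b ∈ 𝔥, m,n ∈ ℤ with mn = 0}. Then 𝓛 decomposes as an internal direct sum of vector subspaces: 𝓛 = C_∞ ⊕ 𝓘 ⊕ ℂc. -/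
noncomputable section

variable (V : Type*) [AddCommGroup V] [Module ℂ V]

variable {V}
variable (B : V →ₗ[ℂ] V →ₗ[ℂ] ℂ)

/-- `C_∞ = span{½(a(m)b(n) + b(n)a(m)) : a,b ∈ 𝔥, m,n ∈ ℤ, m ≠ 0, n ≠ 0}`. -/
def spanCinf : Submodule ℂ (UHeis B) :=
  Submodule.span ℂ {x : UHeis B | ∃ a b : V, ∃ m n : ℤ, m ≠ 0 ∧ n ≠ 0 ∧
    x = (2⁻¹ : ℂ) • (genU B a m * genU B b n + genU B b n * genU B a m)}

/-!
Every product `a(m) b(n)` is its symmetrization plus `½ [a(m), b(n)] ∈ ℂc`, and when `mn = 0` the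
factors commute, so the product is `2 L_{a,b}(m,n)`. The centre `c` lies in `𝓛` because a symmetric
nondegenerate form has a vector with `(a,a) ≠ 0`, and `[a(1), a(-1)] = (a,a) c`. Hence
`𝓛 = C_∞ + 𝓘 + ℂc`.

For directness, fix a basis `(e_i)` of `𝔥` and let `ĥ` act on the Fock space `ℂ[x_{m,i}]`, with `c`
acting as `1` and `a(m)` as multiplication by `x_{a,m}` plus a derivation in the variables of mode
`-m`. Applying `𝓛` to the vacuum `1` sends `C_∞` to quadratic polynomials in nonzero modes, `𝓘` to
quadratic polynomials involving a zero mode, and `ℂc` to constants; these have disjoint monomial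
supports. The vacuum map is injective on `𝓛`: symmetrizing monomials of degree `≤ 2` (with
`1 ↦ c`) inverts it there.
-/

open Function MvPolynomial Pointwise

def Sym2.toExponent {α : Type*} : Sym2 α → (α →₀ ℕ) :=
  Sym2.lift ⟨fun s t => Finsupp.single s 1 + Finsupp.single t 1, fun _ _ => add_comm _ _⟩

lemma Sym2.toExponent_injective {α : Type*} : Injective (Sym2.toExponent (α := α)) := by
  rintro ⟨s, t⟩ ⟨s', t'⟩ h
  simp only [Sym2.toExponent, Sym2.lift_mk, Sym2.eq_iff] at h ⊢
  rcases (Finsupp.single_add_single_eq_single_add_single one_ne_zero one_ne_zero).1 h with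
    h | ⟨-, h⟩ | ⟨h, -⟩
  · exact Or.inl h
  · exact Or.inr h
  · exact absurd h (by norm_num)

lemma Sym2.toExponent_ne_zero {α : Type*} (z : Sym2 α) : z.toExponent ≠ 0 := by
  induction z using Sym2.ind with
  | h s t => simp [Sym2.toExponent]

lemma MvPolynomial.mul_mem_restrictSupport {σ R : Type*} [CommSemiring R]
    {s t : Set (σ →₀ ℕ)} {p q : MvPolynomial σ R} (hp : p ∈ restrictSupport R s)
    (hq : q ∈ restrictSupport R t) : p * q ∈ restrictSupport R (s + t) := by
  classical
  rw [mem_restrictSupport_iff] at hp hq ⊢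
  exact (Finset.coe_subset.2 (support_mul p q)).trans
    ((Finset.coe_add _ _).trans_subset (Set.add_subset_add hp hq))

lemma MvPolynomial.iSupIndep_restrictSupport {σ R ι : Type*} [CommSemiring R]
    {S : ι → Set (σ →₀ ℕ)} (hS : Pairwise (Disjoint on S)) :
    iSupIndep fun i => restrictSupport R (S i) := by
  intro i
  refine Submodule.disjoint_def.2 fun p hi hj => ?_
  have hle : ⨆ (j) (_ : j ≠ i), restrictSupport R (S j) ≤
      restrictSupport R (⋃ (j) (_ : j ≠ i), S j) :=
    iSup₂_le fun j hj => restrictSupport_mono R (Set.subset_biUnion_of_mem (u := S) hj)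
  have hj := hle hj
  rw [mem_restrictSupport_iff] at hi hj
  rw [← support_eq_empty, ← Finset.coe_eq_empty, ← Set.subset_empty_iff]
  intro d hd
  obtain ⟨j, hji, hdj⟩ := Set.mem_iUnion₂.1 (hj hd)
  exact (hS hji).le_bot ⟨hdj, hi hd⟩

lemma iSupIndep_of_map_le {R M N ι : Type*} [Semiring R] [AddCommMonoid M] [Module R M]
    [AddCommMonoid N] [Module R N] {p : ι → Submodule R M} {q : ι → Submodule R N}
    (f : M →ₗ[R] N) (hq : iSupIndep q) (hpq : ∀ i, (p i).map f ≤ q i)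
    (hf : ∀ i, Disjoint (p i) (LinearMap.ker f)) : iSupIndep p := by
  intro i
  refine Submodule.disjoint_def.2 fun x hi hx => LinearMap.disjoint_ker.1 (hf i) x hi ?_
  have hle : (⨆ (j) (_ : j ≠ i), p j).map f ≤ ⨆ (j) (_ : j ≠ i), q j := by
    simp only [Submodule.map_iSup]
    exact iSup₂_mono fun j _ => hpq j
  exact Submodule.disjoint_def.1 (hq i) _ (hpq i ⟨x, hi, rfl⟩) (hle ⟨x, hx, rfl⟩)

section

attribute [local instance] LieRing.ofAssociativeRing

lemma Heis.lie_def_s5 (x y : Heis V B) :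
    ⁅x, y⁆ = ((0 : ℤ →₀ V), (heisP B x.1 y.1 - heisP B y.1 x.1) / 2) := rfl

lemma heisP_single_left (m : ℤ) (a : V) (g : ℤ →₀ V) :
    heisP B (Finsupp.single m a) g = m * B a (g (-m)) :=
  Finsupp.sum_single_index (by simp)

lemma heisP_single_single_of_mul_eq_zero {m n : ℤ} (hmn : m * n = 0) (a b : V) :
    heisP B (Finsupp.single m a) (Finsupp.single n b) = 0 := by
  rw [heisP_single_left, Finsupp.single_apply]
  split_ifs with h <;> rcases mul_eq_zero.1 hmn with rfl | rfl <;> simp_all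

lemma heisP_single_single_antisymm (hsym : ∀ x y, B x y = B y x) (m n : ℤ) (a b : V) :
    heisP B (Finsupp.single n b) (Finsupp.single m a) =
      -heisP B (Finsupp.single m a) (Finsupp.single n b) := by
  simp only [heisP_single_left, Finsupp.single_apply]
  by_cases h : n = -m
  · subst h
    simp [hsym b a]
  · rw [if_neg h, if_neg (by omega)]
    simp

lemma genU_mul_genU_sub (a b : V) (m n : ℤ) :
    genU B a m * genU B b n - genU B b n * genU B a m =
      ((heisP B (Finsupp.single m a) (Finsupp.single n b) -
        heisP B (Finsupp.single n b) (Finsupp.single m a)) / 2) • cenU B := by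
  rw [← LieRing.of_associative_ring_bracket, genU, genU, ← LieHom.map_lie, cenU, ← map_smul]
  congr 1
  rw [Heis.lie_def_s5]
  refine Prod.ext (smul_zero _).symm ?_
  exact (mul_one _).symm

lemma genU_mul_genU_comm_of_mul_eq_zero {m n : ℤ} (hmn : m * n = 0) (a b : V) :
    genU B a m * genU B b n = genU B b n * genU B a m := by
  rw [← sub_eq_zero, genU_mul_genU_sub, heisP_single_single_of_mul_eq_zero B hmn,
    heisP_single_single_of_mul_eq_zero B ((mul_comm n m).trans hmn)]
  simp

lemma genU_mul_genU_eq_symm_add (hsym : ∀ x y, B x y = B y x) (a b : V) (m n : ℤ) :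
    genU B a m * genU B b n =
      (2⁻¹ : ℂ) • (genU B a m * genU B b n + genU B b n * genU B a m) +
        (heisP B (Finsupp.single m a) (Finsupp.single n b) / 2) • cenU B := by
  have h := genU_mul_genU_sub B a b m n
  rw [heisP_single_single_antisymm B hsym m n a b] at h
  linear_combination (norm := module) (2⁻¹ : ℂ) • h

lemma LU_of_mul_eq_zero {m n : ℤ} (hmn : m * n = 0) (a b : V) :
    LU B a b m n = (2⁻¹ : ℂ) • (genU B a m * genU B b n) := by
  rw [LU, no]
  split_ifs
  · rw [genU_mul_genU_comm_of_mul_eq_zero B hmn]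
  · rfl

lemma exists_apply_self_ne_zero [Nontrivial V] (hsym : ∀ x y, B x y = B y x)
    (hnd : ∀ x, (∀ y, B x y = 0) → x = 0) : ∃ a, B a a ≠ 0 := by
  refine LinearMap.BilinForm.exists_bilinForm_self_ne_zero (fun hB => ?_) ⟨hsym⟩
  obtain ⟨x, hx⟩ := exists_ne (0 : V)
  exact hx (hnd x fun y => by simp [hB])

lemma cenU_mem_spanL {a : V} (ha : B a a ≠ 0) : cenU B ∈ spanL B := by
  have h := genU_mul_genU_sub B a a 1 (-1)
  simp only [heisP_single_left, Finsupp.single_apply] at h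
  norm_num at h
  have hc : cenU B = (B a a)⁻¹ • (genU B a 1 * genU B a (-1) - genU B a (-1) * genU B a 1) := by
    rw [h, smul_smul, inv_mul_cancel₀ ha, one_smul]
  rw [hc]
  exact Submodule.smul_mem _ _ (Submodule.sub_mem _ (Submodule.subset_span ⟨a, a, 1, -1, rfl⟩)
    (Submodule.subset_span ⟨a, a, -1, 1, rfl⟩))

lemma spanL_eq_sup (hsym : ∀ x y, B x y = B y x) {v : V} (hv : B v v ≠ 0) :
    spanL B = spanCinf B ⊔ spanI B ⊔ (ℂ ∙ cenU B) := by
  have hc : cenU B ∈ spanCinf B ⊔ spanI B ⊔ (ℂ ∙ cenU B) :=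
    Submodule.mem_sup_right (Submodule.mem_span_singleton_self _)
  refine le_antisymm (Submodule.span_le.2 ?_) (sup_le (sup_le ?_ ?_) ?_)
  · rintro _ ⟨a, b, m, n, rfl⟩
    by_cases hmn : m * n = 0
    · have hI : genU B a m * genU B b n = (2 : ℂ) • LU B a b m n := by
        rw [LU_of_mul_eq_zero B hmn, smul_smul]
        norm_num
      rw [SetLike.mem_coe, hI]
      exact Submodule.mem_sup_left (Submodule.mem_sup_right
        (Submodule.smul_mem _ _ (Submodule.subset_span ⟨a, b, m, n, hmn, rfl⟩)))
    · rw [SetLike.mem_coe, genU_mul_genU_eq_symm_add B hsym]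
      refine Submodule.add_mem _ (Submodule.mem_sup_left (Submodule.mem_sup_left
        (Submodule.subset_span ⟨a, b, m, n, left_ne_zero_of_mul hmn, right_ne_zero_of_mul hmn,
          rfl⟩))) (Submodule.smul_mem _ _ hc)
  · refine Submodule.span_le.2 ?_
    rintro _ ⟨a, b, m, n, -, -, rfl⟩
    exact Submodule.smul_mem _ _ (Submodule.add_mem _ (Submodule.subset_span ⟨a, b, m, n, rfl⟩)
      (Submodule.subset_span ⟨b, a, n, m, rfl⟩))
  · refine Submodule.span_le.2 ?_
    rintro _ ⟨a, b, m, n, hmn, rfl⟩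
    rw [SetLike.mem_coe, LU_of_mul_eq_zero B hmn]
    exact Submodule.smul_mem _ _ (Submodule.subset_span ⟨a, b, m, n, rfl⟩)
  · exact (Submodule.span_singleton_le_iff_mem _ _).2 (cenU_mem_spanL B hv)

def heisPₗ : (ℤ →₀ V) →ₗ[ℂ] (ℤ →₀ V) →ₗ[ℂ] ℂ :=
  LinearMap.mk₂ ℂ (heisP B) (heisP_add_left B) (heisP_smul_left B) (heisP_add_right B)
    (heisP_smul_right B)

abbrev FockSpace (ι : Type*) : Type _ := MvPolynomial ((_ : ℤ) × ι) ℂ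

variable {ι : Type*} (e : Module.Basis ι ℂ V)

def fockX : (ℤ →₀ V) →ₗ[ℂ] FockSpace ι := (Finsupp.basis fun _ => e).constr ℂ X

lemma fockX_single_basis (m : ℤ) (i : ι) : fockX e (Finsupp.single m (e i)) = X ⟨m, i⟩ := by
  have h := (Finsupp.basis fun _ : ℤ => e).constr_basis ℂ (X : _ → FockSpace ι) ⟨m, i⟩
  rwa [Finsupp.coe_basis] at h

-- The factor `½` matches the bracket `½ (P(f,g) - P(g,f)) c` of `Heis`, `c` acting as `1`.
def fockD : (ℤ →₀ V) →ₗ[ℂ] Derivation ℂ (FockSpace ι) (FockSpace ι) where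
  toFun f := mkDerivation ℂ fun s => C (heisP B f (Finsupp.single s.1 (e s.2)) / 2)
  map_add' f g := derivation_ext fun s => by simp [heisP_add_left, add_div]
  map_smul' t f := derivation_ext fun s => by
    simp [heisP_smul_left, mul_div_assoc, smul_eq_C_mul]

lemma fockD_fockX (f g : ℤ →₀ V) : fockD B e f (fockX e g) = C (heisP B f g / 2) := by
  have h : (fockD B e f : FockSpace ι →ₗ[ℂ] FockSpace ι) ∘ₗ fockX e =
      (2⁻¹ : ℂ) • (Algebra.linearMap ℂ (FockSpace ι) ∘ₗ heisPₗ B f) :=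
    (Finsupp.basis fun _ => e).ext fun s => by
      simp [fockX_single_basis, fockD, heisPₗ, div_eq_inv_mul, smul_eq_C_mul]
  simpa [heisPₗ, div_eq_inv_mul, smul_eq_C_mul] using LinearMap.congr_fun h g

lemma fockD_comm (f g : ℤ →₀ V) (p : FockSpace ι) :
    fockD B e f (fockD B e g p) = fockD B e g (fockD B e f p) := by
  have h : ⁅fockD B e f, fockD B e g⁆ = 0 := derivation_ext fun s => by
    simp [Derivation.commutator_apply, fockD, ← algebraMap_eq]
  rw [← sub_eq_zero, ← Derivation.commutator_apply, h, Derivation.zero_apply]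

def fockRep : Heis V B →ₗ⁅ℂ⁆ Module.End ℂ (FockSpace ι) where
  toFun h := LinearMap.mulLeft ℂ (fockX e h.1 + C h.2) + (fockD B e h.1).toLinearMap
  map_add' h k := LinearMap.ext fun p => by
    simp only [Heis.add_fst, Heis.add_snd, map_add, Derivation.coe_add_linearMap,
      LinearMap.add_apply, LinearMap.mulLeft_apply, Derivation.coeFn_coe]
    ring
  map_smul' t h := LinearMap.ext fun p => by
    simp only [Heis.smul_fst, Heis.smul_snd, map_smul, smul_eq_C_mul, smul_eq_mul, C_mul,
      Derivation.coe_smul_linearMap, LinearMap.add_apply, LinearMap.mulLeft_apply,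
      LinearMap.smul_apply, Derivation.coeFn_coe, RingHom.id_apply]
    ring
  map_lie' {h k} := LinearMap.ext fun p => by
    simp only [Heis.lie_def_s5, map_zero, zero_add, Derivation.coe_zero_linearMap, add_zero,
      LinearMap.mulLeft_apply, LieRing.of_associative_ring_bracket, LinearMap.sub_apply,
      Module.End.mul_apply, LinearMap.add_apply, Derivation.coeFn_coe, map_add,
      Derivation.leibniz, smul_eq_mul, fockD_fockX, derivation_C, fockD_comm B e h.1 k.1]
    rw [sub_div, map_sub]
    ring

def fockVac : UHeis B →ₗ[ℂ] FockSpace ι :=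
  LinearMap.applyₗ 1 ∘ₗ (UniversalEnvelopingAlgebra.lift ℂ (fockRep B e)).toLinearMap

lemma fockVac_ι_mul_ι (h k : Heis V B) :
    fockVac B e (UniversalEnvelopingAlgebra.ι ℂ h * UniversalEnvelopingAlgebra.ι ℂ k) =
      (fockX e h.1 + C h.2) * (fockX e k.1 + C k.2) + C (heisP B h.1 k.1 / 2) := by
  simp [fockVac, fockRep, fockD_fockX]

lemma fockVac_genU_mul_genU (a b : V) (m n : ℤ) :
    fockVac B e (genU B a m * genU B b n) =
      fockX e (Finsupp.single m a) * fockX e (Finsupp.single n b) +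
        C (heisP B (Finsupp.single m a) (Finsupp.single n b) / 2) := by
  simpa [genU, Heis.gen] using fockVac_ι_mul_ι B e (Heis.gen B a m) (Heis.gen B b n)

lemma fockVac_cenU : fockVac B e (cenU B) = 1 := by
  simp only [fockVac, cenU, LinearMap.comp_apply, AlgHom.toLinearMap_apply,
    UniversalEnvelopingAlgebra.lift_ι_apply]
  simp [fockRep, Heis.cen]

def genUₗ (m : ℤ) : V →ₗ[ℂ] UHeis B :=
  (UniversalEnvelopingAlgebra.ι ℂ).toLinearMap ∘ₗ
    (LinearMap.inl ℂ (ℤ →₀ V) ℂ ∘ₗ Finsupp.lsingle m : V →ₗ[ℂ] Heis V B)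

lemma genUₗ_apply (m : ℤ) (a : V) : genUₗ B m a = genU B a m := rfl

def genSymmProduct : Sym2 ((_ : ℤ) × ι) → UHeis B :=
  Sym2.lift ⟨fun s t => (2⁻¹ : ℂ) • (genU B (e s.2) s.1 * genU B (e t.2) t.1 +
    genU B (e t.2) t.1 * genU B (e s.2) s.1), fun _ _ => by simp only [add_comm]⟩

-- The vacuum `1` goes back to `c`, which acts on it as `1`; monomials of degree `≠ 0, 2` go to `0`.
open Classical in
def fockSymmetrization : FockSpace ι →ₗ[ℂ] UHeis B :=
  (basisMonomials _ ℂ).constr ℂ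
    (Function.extend Sym2.toExponent (genSymmProduct B e) (Pi.single 0 (cenU B)))

lemma fockSymmetrization_X_mul_X (s t : (_ : ℤ) × ι) :
    fockSymmetrization B e (X s * X t) = genSymmProduct B e s(s, t) := by
  have h : (X s * X t : FockSpace ι) = basisMonomials _ ℂ (Sym2.toExponent s(s, t)) := by
    simp [Sym2.toExponent, X, monomial_mul]
  rw [h, fockSymmetrization, Module.Basis.constr_basis, Sym2.toExponent_injective.extend_apply]

lemma fockSymmetrization_one : fockSymmetrization B e 1 = cenU B := by
  classical
  have h : (1 : FockSpace ι) = basisMonomials _ ℂ 0 := by simp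
  rw [h, fockSymmetrization, Module.Basis.constr_basis,
    Function.extend_apply' _ _ _ fun ⟨z, hz⟩ => Sym2.toExponent_ne_zero z hz, Pi.single_eq_same]

lemma fockSymmetrization_fockX_mul_fockX (a b : V) (m n : ℤ) :
    fockSymmetrization B e (fockX e (Finsupp.single m a) * fockX e (Finsupp.single n b)) =
      (2⁻¹ : ℂ) • (genU B a m * genU B b n + genU B b n * genU B a m) := by
  have h : ((LinearMap.mul ℂ (FockSpace ι)).compl₁₂ (fockX e ∘ₗ Finsupp.lsingle m)
      (fockX e ∘ₗ Finsupp.lsingle n)).compr₂ (fockSymmetrization B e) =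
      (2⁻¹ : ℂ) • ((LinearMap.mul ℂ (UHeis B)).compl₁₂ (genUₗ B m) (genUₗ B n) +
        ((LinearMap.mul ℂ (UHeis B)).compl₁₂ (genUₗ B n) (genUₗ B m)).flip) :=
    LinearMap.ext_basis e e fun i j => by
      simp [fockX_single_basis, fockSymmetrization_X_mul_X, genSymmProduct, genUₗ_apply]
  simpa [genUₗ_apply] using LinearMap.congr_fun₂ h a b

lemma fockSymmetrization_fockVac_genU_mul_genU (hsym : ∀ x y, B x y = B y x) (a b : V)
    (m n : ℤ) :
    fockSymmetrization B e (fockVac B e (genU B a m * genU B b n)) = genU B a m * genU B b n := by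
  rw [fockVac_genU_mul_genU, map_add, fockSymmetrization_fockX_mul_fockX, C_eq_smul_one,
    map_smul, fockSymmetrization_one]
  exact (genU_mul_genU_eq_symm_add B hsym a b m n).symm

lemma fockSymmetrization_fockVac_of_mem_spanL (hsym : ∀ x y, B x y = B y x) {u : UHeis B}
    (hu : u ∈ spanL B) : fockSymmetrization B e (fockVac B e u) = u :=
  LinearMap.eqOn_span' (f := fockSymmetrization B e ∘ₗ fockVac B e) (g := LinearMap.id)
    (by rintro _ ⟨a, b, m, n, rfl⟩; exact fockSymmetrization_fockVac_genU_mul_genU B e hsym ..) hu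

variable (ι) in
def modeMonomials (M : Set ℤ) : Set ((_ : ℤ) × ι →₀ ℕ) :=
  (fun s => Finsupp.single s 1) '' (Sigma.fst ⁻¹' M)

lemma modeMonomials_mono {M N : Set ℤ} (h : M ⊆ N) : modeMonomials ι M ⊆ modeMonomials ι N :=
  Set.image_mono (Set.preimage_mono h)

lemma disjoint_modeMonomials_add {M M' : Set ℤ} (h : Disjoint M M') (N : Set ℤ) :
    Disjoint (modeMonomials ι M + modeMonomials ι M) (modeMonomials ι M' + modeMonomials ι N) := by
  rw [Set.disjoint_left]
  rintro _ ⟨_, ⟨s, hs, rfl⟩, _, ⟨t, ht, rfl⟩, rfl⟩ ⟨_, ⟨s', hs', rfl⟩, _, ⟨t', -, rfl⟩, heq⟩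
  rcases (Finsupp.single_add_single_eq_single_add_single one_ne_zero one_ne_zero).1 heq with
    ⟨rfl, -⟩ | ⟨-, rfl, -⟩ | ⟨h2, -⟩
  · exact h.ne_of_mem (Set.mem_preimage.1 hs) (Set.mem_preimage.1 hs') rfl
  · exact h.ne_of_mem (Set.mem_preimage.1 ht) (Set.mem_preimage.1 hs') rfl
  · exact absurd h2 (by norm_num)

lemma zero_notMem_modeMonomials_add (M N : Set ℤ) :
    (0 : (_ : ℤ) × ι →₀ ℕ) ∉ modeMonomials ι M + modeMonomials ι N := by
  rintro ⟨_, ⟨s, -, rfl⟩, _, ⟨t, -, rfl⟩, h⟩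
  exact Sym2.toExponent_ne_zero s(s, t) h

variable (ι) in
def modeClasses : Fin 3 → Set ((_ : ℤ) × ι →₀ ℕ) :=
  ![modeMonomials ι {0}ᶜ + modeMonomials ι {0}ᶜ, modeMonomials ι {0} + modeMonomials ι Set.univ,
    {0}]

lemma pairwise_disjoint_modeClasses : Pairwise (Disjoint on modeClasses ι) := by
  have h01 := disjoint_modeMonomials_add (ι := ι) (disjoint_compl_left (a := {0})) Set.univ
  have h2 := fun M N => Set.disjoint_singleton_right.2 (zero_notMem_modeMonomials_add (ι := ι) M N)
  intro i j hij
  fin_cases i <;> fin_cases j <;> simp_all [onFun, modeClasses, h01.symm]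

lemma fockX_single_mem (m : ℤ) (a : V) :
    fockX e (Finsupp.single m a) ∈ restrictSupport ℂ (modeMonomials ι {m}) := by
  have h : (⊤ : Submodule ℂ V) ≤
      (restrictSupport ℂ (modeMonomials ι {m})).comap (fockX e ∘ₗ Finsupp.lsingle m) := by
    rw [← e.span_eq, Submodule.span_le]
    rintro _ ⟨i, rfl⟩
    rw [SetLike.mem_coe, Submodule.mem_comap, LinearMap.comp_apply, Finsupp.lsingle_apply,
      fockX_single_basis, restrictSupport_eq_span]
    exact Submodule.subset_span ⟨_, ⟨⟨m, i⟩, rfl, rfl⟩, rfl⟩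
  exact h Submodule.mem_top

lemma fockX_mul_fockX_mem (m n : ℤ) (a b : V) :
    fockX e (Finsupp.single m a) * fockX e (Finsupp.single n b) ∈
      restrictSupport ℂ (modeMonomials ι {m} + modeMonomials ι {n}) :=
  mul_mem_restrictSupport (fockX_single_mem e m a) (fockX_single_mem e n b)

lemma map_spanCinf_le (hsym : ∀ x y, B x y = B y x) :
    (spanCinf B).map (fockVac B e) ≤
      restrictSupport ℂ (modeMonomials ι {0}ᶜ + modeMonomials ι {0}ᶜ) := by
  rw [spanCinf, Submodule.map_span, Submodule.span_le]
  rintro _ ⟨_, ⟨a, b, m, n, hm, hn, rfl⟩, rfl⟩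
  rw [SetLike.mem_coe, ← sub_eq_of_eq_add (genU_mul_genU_eq_symm_add B hsym a b m n), map_sub,
    map_smul, fockVac_genU_mul_genU, fockVac_cenU, C_eq_smul_one, add_sub_cancel_right]
  exact restrictSupport_mono ℂ
    (Set.add_subset_add (modeMonomials_mono (Set.singleton_subset_iff.2 hm))
      (modeMonomials_mono (Set.singleton_subset_iff.2 hn))) (fockX_mul_fockX_mem e m n a b)

lemma map_spanI_le :
    (spanI B).map (fockVac B e) ≤
      restrictSupport ℂ (modeMonomials ι {0} + modeMonomials ι Set.univ) := by
  rw [spanI, Submodule.map_span, Submodule.span_le]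
  rintro _ ⟨_, ⟨a, b, m, n, hmn, rfl⟩, rfl⟩
  rw [SetLike.mem_coe, LU_of_mul_eq_zero B hmn, map_smul, fockVac_genU_mul_genU,
    heisP_single_single_of_mul_eq_zero B hmn, zero_div, C_0, add_zero]
  refine Submodule.smul_mem _ _ (restrictSupport_mono ℂ ?_ (fockX_mul_fockX_mem e m n a b))
  rcases mul_eq_zero.1 hmn with rfl | rfl
  · exact Set.add_subset_add subset_rfl (modeMonomials_mono (Set.subset_univ _))
  · rw [add_comm]
    exact Set.add_subset_add subset_rfl (modeMonomials_mono (Set.subset_univ _))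

lemma map_span_cenU_le : (ℂ ∙ cenU B).map (fockVac B e) ≤ restrictSupport ℂ {0} := by
  rw [Submodule.map_span, Set.image_singleton, Submodule.span_singleton_le_iff_mem,
    fockVac_cenU, restrictSupport_eq_span]
  exact Submodule.subset_span ⟨0, rfl, rfl⟩

end

theorem spanL_eq_direct_sum_Cinf_I_c
    (hdim : 1 ≤ Module.finrank ℂ V)
    (hsym : ∀ x y, B x y = B y x)
    (hnd : ∀ x, (∀ y, B x y = 0) → x = 0) :
    spanL B = spanCinf B ⊔ spanI B ⊔ (ℂ ∙ cenU B) ∧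
      iSupIndep ![spanCinf B, spanI B, ℂ ∙ cenU B] := by
  have := Module.nontrivial_of_finrank_pos (R := ℂ) hdim
  obtain ⟨a, ha⟩ := exists_apply_self_ne_zero B hsym hnd
  have hL := spanL_eq_sup B hsym ha
  refine ⟨hL, ?_⟩
  obtain ⟨ι, ⟨e⟩⟩ : ∃ ι : Type _, Nonempty (Module.Basis ι ℂ V) :=
    ⟨_, ⟨Module.Basis.ofVectorSpace ℂ V⟩⟩
  have hker : Disjoint (spanL B) (LinearMap.ker (fockVac B e)) :=
    LinearMap.disjoint_ker.2 fun u hu h0 => by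
      rw [← fockSymmetrization_fockVac_of_mem_spanL B e hsym hu, h0, map_zero]
  refine iSupIndep_of_map_le (fockVac B e) (q := fun i => restrictSupport ℂ (modeClasses ι i))
    (MvPolynomial.iSupIndep_restrictSupport pairwise_disjoint_modeClasses) (fun i => ?_)
    (fun i => hker.mono_left (hL ▸ ?_))
  · fin_cases i
    exacts [map_spanCinf_le B e hsym, map_spanI_le B e, map_span_cenU_le B e]
  · fin_cases i
    exacts [le_sup_left.trans le_sup_left, le_sup_right.trans le_sup_left, le_sup_right]
end
end
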